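/- Let Q̄ be an imprecise probability tree and E_V the associated game-theoretic upper expectation. For every situation s ∈ 𝒳* and every sequence (f_n)_{n∈ℕ₀} of global variables that is uniformly bounded below (there is a real c with f_n(ω) ≥ c for all n and all ω), one has E_V(liminf_{n→∞} f_n | s) ≤ liminf_{n→∞} E_V(f_n | s), where liminf_{n→∞} f_n is taken pointwise. -/

import Mathlib

open Filter MeasureTheory
open scoped Classical ENNReal NNReal

namespace UEP

variable {X : Type*}

/-- The string of the first `n` states of a path `ω`. -/
def pref (ω : ℕ → X) (n : ℕ) : List X := List.ofFn (fun i : Fin n => ω i)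

/-- The cylinder event of a situation `s`. -/
def cyl (s : List X) : Set (ℕ → X) := {ω : ℕ → X | pref ω s.length = s}

/-- `f` depends only on the first `n` states. -/
def NMeas (n : ℕ) (f : (ℕ → X) → EReal) : Prop :=
  ∀ ω₁ ω₂ : ℕ → X, pref ω₁ n = pref ω₂ n → f ω₁ = f ω₂

/-- `f` is bounded below (by a real constant). -/
def IsBddBelow (f : (ℕ → X) → EReal) : Prop := ∃ c : ℝ, ∀ ω, (c : EReal) ≤ f ω

/-- `f` is bounded above (by a real constant). -/
def IsBddAbove (f : (ℕ → X) → EReal) : Prop := ∃ c : ℝ, ∀ ω, f ω ≤ (c : EReal)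

/-- `f` is real-valued and bounded. -/
def IsGambleVal (f : (ℕ → X) → EReal) : Prop :=
  ∃ a b : ℝ, ∀ ω, (a : EReal) ≤ f ω ∧ f ω ≤ (b : EReal)

/-- `f` is an `n`-measurable gamble. -/
def IsNGamble (n : ℕ) (f : (ℕ → X) → EReal) : Prop := NMeas n f ∧ IsGambleVal f

/-- `f` is a finitary gamble. -/
def IsFinitaryGamble (f : (ℕ → X) → EReal) : Prop := (∃ n, NMeas n f) ∧ IsGambleVal f

/-- `f` is finitary. -/
def IsFinitary (f : (ℕ → X) → EReal) : Prop := ∃ n, NMeas n f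

/-- pointwise convergence of a sequence of global variables. -/
def PtwLim (fs : ℕ → (ℕ → X) → EReal) (f : (ℕ → X) → EReal) : Prop :=
  ∀ ω, Tendsto (fun n => fs n ω) atTop (nhds (f ω))

/-- the sequence is uniformly bounded below. -/
def UnifBddBelow (fs : ℕ → (ℕ → X) → EReal) : Prop :=
  ∃ c : ℝ, ∀ n ω, (c : EReal) ≤ fs n ω

/-- `f` belongs to `V̄_{b,lim}`: bounded below and a pointwise limit of finitary gambles. -/
def Vblim (f : (ℕ → X) → EReal) : Prop :=
  IsBddBelow f ∧ ∃ fs : ℕ → (ℕ → X) → EReal,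
    (∀ n, IsFinitaryGamble (fs n)) ∧ PtwLim fs f

/-- A coherent upper expectation on the finite state space `X`. -/
def IsCoherent [Fintype X] (Q : (X → ℝ) → ℝ) : Prop :=
  (∀ f : X → ℝ, Q f ≤ ⨆ x, f x) ∧
  (∀ f g : X → ℝ, Q (fun x => f x + g x) ≤ Q f + Q g) ∧
  (∀ l : ℝ, 0 ≤ l → ∀ f : X → ℝ, Q (fun x => l * f x) = l * Q f)

/-- Axiom P1: compatibility with the local models. -/
def P1 (Q : List X → (X → ℝ) → ℝ) (E : ((ℕ → X) → EReal) → List X → EReal) : Prop :=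
  ∀ (s : List X) (f : X → ℝ),
    E (fun ω => (f (ω s.length) : EReal)) s = ((Q s f : ℝ) : EReal)

/-- Axiom P2. -/
def P2 (E : ((ℕ → X) → EReal) → List X → EReal) : Prop :=
  ∀ f : (ℕ → X) → EReal, IsFinitaryGamble f → ∀ s : List X,
    E f s = E (fun ω => if ω ∈ cyl s then f ω else 0) s

/-- Axiom P3 (inequality form). -/
def P3le (E : ((ℕ → X) → EReal) → List X → EReal) : Prop :=
  ∀ f : (ℕ → X) → EReal, IsFinitaryGamble f → ∀ (n : ℕ) (ω : ℕ → X),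
    E f (pref ω n) ≤ E (fun ω' => E f (pref ω' (n + 1))) (pref ω n)

/-- Axiom P3 with equality: the law of iterated upper expectations. -/
def P3eq (E : ((ℕ → X) → EReal) → List X → EReal) : Prop :=
  ∀ f : (ℕ → X) → EReal, IsFinitaryGamble f → ∀ (n : ℕ) (ω : ℕ → X),
    E f (pref ω n) = E (fun ω' => E f (pref ω' (n + 1))) (pref ω n)

/-- Axiom P4: monotonicity. -/
def P4 (E : ((ℕ → X) → EReal) → List X → EReal) : Prop :=
  ∀ f g : (ℕ → X) → EReal, (∀ ω, f ω ≤ g ω) → ∀ s : List X, E f s ≤ E g s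

/-- Axiom P5. -/
def P5 (E : ((ℕ → X) → EReal) → List X → EReal) : Prop :=
  ∀ (s : List X) (f : (ℕ → X) → EReal) (fs : ℕ → (ℕ → X) → EReal),
    (∀ n, IsFinitaryGamble (fs n)) → UnifBddBelow fs → PtwLim fs f →
    E f s ≤ limsup (fun n => E (fs n) s) atTop

/-- Axiom P6. -/
def P6 (E : ((ℕ → X) → EReal) → List X → EReal) : Prop :=
  ∀ f : (ℕ → X) → EReal, Vblim f → ∀ s : List X,
    ∃ fs : ℕ → (ℕ → X) → EReal,
      (∀ n, IsNGamble n (fs n)) ∧ UnifBddBelow fs ∧ PtwLim fs f ∧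
      limsup (fun n => E (fs n) s) atTop ≤ E f s

/-- Axiom P7. -/
def P7 (E : ((ℕ → X) → EReal) → List X → EReal) : Prop :=
  ∀ (f : (ℕ → X) → EReal) (s : List X),
    E f s = sInf {y : EReal | ∃ g : (ℕ → X) → EReal,
      Vblim g ∧ (∀ ω, f ω ≤ g ω) ∧ y = E g s}

/-- bundled axioms P1–P5. -/
def P15 (Q : List X → (X → ℝ) → ℝ) (E : ((ℕ → X) → EReal) → List X → EReal) : Prop :=
  P1 Q E ∧ P2 E ∧ P3le E ∧ P4 E ∧ P5 E

/-- `Qe` extends `Q` from gambles to extended-real variables. -/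
def ExtendsLocal [Fintype X] (Q : (X → ℝ) → ℝ) (Qe : (X → EReal) → EReal) : Prop :=
  ∀ f : X → ℝ, Qe (fun x => (f x : EReal)) = ((Q f : ℝ) : EReal)

/-- continuity with respect to upper cuts. -/
def UpperCutCont (Qe : (X → EReal) → EReal) : Prop :=
  ∀ f : X → EReal, (∃ c : ℝ, ∀ x, (c : EReal) ≤ f x) →
    Tendsto (fun c : ℝ => Qe (fun x => min (f x) (c : EReal))) atTop (nhds (Qe f))

/-- continuity with respect to lower cuts. -/
def LowerCutCont (Qe : (X → EReal) → EReal) : Prop :=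
  ∀ f : X → EReal,
    Tendsto (fun c : ℝ => Qe (fun x => max (f x) (c : EReal))) atBot (nhds (Qe f))

/-- `Qe` is the extension of the imprecise probability tree `Q` satisfying
continuity with respect to upper and lower cuts. -/
def LocalExtension [Fintype X] (Q : List X → (X → ℝ) → ℝ)
    (Qe : List X → (X → EReal) → EReal) : Prop :=
  ∀ s : List X, ExtendsLocal (Q s) (Qe s) ∧ UpperCutCont (Qe s) ∧ LowerCutCont (Qe s)

/-- supermartingale with respect to the extended local models `Qe`. -/
def IsSupermart (Qe : List X → (X → EReal) → EReal) (M : List X → EReal) : Prop :=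
  ∀ s : List X, Qe s (fun x => M (s ++ [x])) ≤ M s

/-- a bounded-below process. -/
def MBddBelow (M : List X → EReal) : Prop := ∃ c : ℝ, ∀ s : List X, (c : EReal) ≤ M s

/-- the game-theoretic upper expectation (Shafer–Vovk). -/
noncomputable def EV (Qe : List X → (X → EReal) → EReal)
    (f : (ℕ → X) → EReal) (s : List X) : EReal :=
  sInf {y : EReal | ∃ M : List X → EReal, MBddBelow M ∧ IsSupermart Qe M ∧
    (∀ ω ∈ cyl s, f ω ≤ liminf (fun n => M (pref ω n)) atTop) ∧ y = M s}

/-- a canonical path passing through the situation `s`. -/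
noncomputable def extPath [Nonempty X] (s : List X) : ℕ → X :=
  fun i => if h : i < s.length then s.get ⟨i, h⟩ else Classical.arbitrary X

/-- extended-real addition with the convention `(+∞) + (−∞) = (−∞) + (+∞) = +∞`. -/
noncomputable def eadd (a b : EReal) : EReal := if a = ⊤ ∨ b = ⊤ then ⊤ else a + b

/-- extended-real finite sums with the conventions `0·(±∞) = 0` and
`(+∞) + (−∞) = +∞`. -/
noncomputable def esum {α : Type*} (s : Finset α) (f : α → EReal) : EReal :=
  if ∃ x ∈ s, f x = ⊤ then ⊤ else ∑ x ∈ s, f x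

/-- the σ-algebra `ℱ` on paths generated by all cylinder events. -/
def cylSA (X : Type*) : MeasurableSpace (ℕ → X) :=
  MeasurableSpace.generateFrom {A : Set (ℕ → X) | ∃ s : List X, A = cyl s}

/-- a precise probability tree: a probability mass function in every situation. -/
def IsTree [Fintype X] (p : List X → X → ℝ) : Prop :=
  ∀ s : List X, (∀ x, 0 ≤ p s x) ∧ ∑ x, p s x = 1

/-- the `i`-th entry (0-based) of a list, i.e. the `(i+1)`-th state. -/
noncomputable def nthL [Nonempty X] (z : List X) (i : ℕ) : X :=
  z.getD i (Classical.arbitrary X)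

/-- `P` is the family of conditional probability measures on `ℱ` determined by
the precise probability tree `p` via the product formula on cylinder events. -/
def CylProp [Fintype X] [Nonempty X] (p : List X → X → ℝ)
    (P : List X → @Measure (ℕ → X) (cylSA X)) : Prop :=
  ∀ s z : List X,
    P s (cyl z) =
      if s.length < z.length ∧ z.take s.length = s then
        ∏ i ∈ Finset.Ico s.length z.length, ENNReal.ofReal (p (z.take i) (nthL z i))
      else if z.length ≤ s.length ∧ s.take z.length = z then 1 else 0

/-- the nonnegative part of an extended real, as an `ℝ≥0∞`. -/
noncomputable def toENN (a : EReal) : ℝ≥0∞ := if a = ⊤ then ⊤ else ENNReal.ofReal a.toReal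

/-- `∫ f⁺ dP`. -/
noncomputable def lpos (P : @Measure (ℕ → X) (cylSA X)) (f : (ℕ → X) → EReal) : ℝ≥0∞ :=
  @MeasureTheory.lintegral _ (cylSA X) P (fun ω => toENN (f ω))

/-- `∫ f⁻ dP`. -/
noncomputable def lneg (P : @Measure (ℕ → X) (cylSA X)) (f : (ℕ → X) → EReal) : ℝ≥0∞ :=
  @MeasureTheory.lintegral _ (cylSA X) P (fun ω => toENN (-(f ω)))

/-- the Lebesgue integral `∫ f dP = ∫ f⁺ dP − ∫ f⁻ dP`. -/
noncomputable def emeas (P : @Measure (ℕ → X) (cylSA X)) (f : (ℕ → X) → EReal) : EReal :=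
  (lpos P f : EReal) - (lneg P f : EReal)

/-- `ℱ`-measurability of a global variable. -/
def FMeasurable (f : (ℕ → X) → EReal) : Prop := @Measurable _ _ (cylSA X) _ f

/-- the Lebesgue integral `∫ f dP` exists. -/
def EMeasExists (P : @Measure (ℕ → X) (cylSA X)) (f : (ℕ → X) → EReal) : Prop :=
  FMeasurable f ∧ min (lpos P f) (lneg P f) < ⊤

/-- the upper integral `Ē¹`. -/
noncomputable def upInt1 (P : @Measure (ℕ → X) (cylSA X)) (f : (ℕ → X) → EReal) : EReal :=
  sInf {y : EReal | ∃ g : (ℕ → X) → EReal,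
    FMeasurable g ∧ IsBddBelow g ∧ (∀ ω, f ω ≤ g ω) ∧ y = emeas P g}

/-- the upper integral `Ē²`. -/
noncomputable def upInt2 (P : @Measure (ℕ → X) (cylSA X)) (f : (ℕ → X) → EReal) : EReal :=
  sInf {y : EReal | ∃ g : (ℕ → X) → EReal,
    EMeasExists P g ∧ (∀ ω, f ω ≤ g ω) ∧ y = emeas P g}

/-- the game-theoretic upper expectation with respect to a precise probability tree. -/
noncomputable def EVp [Fintype X] (p : List X → X → ℝ)
    (f : (ℕ → X) → EReal) (s : List X) : EReal :=
  sInf {y : EReal | ∃ M : List X → EReal, MBddBelow M ∧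
    (∀ t : List X, ∑ x, ((p t x : ℝ) : EReal) * M (t ++ [x]) ≤ M t) ∧
    (∀ ω ∈ cyl s, f ω ≤ liminf (fun n => M (pref ω n)) atTop) ∧ y = M s}

/-- the credal set of a coherent upper expectation. -/
def credal [Fintype X] (Q : (X → ℝ) → ℝ) : Set (X → ℝ) :=
  {q | (∀ x, 0 ≤ q x) ∧ (∑ x, q x = 1) ∧ ∀ f : X → ℝ, ∑ x, f x * q x ≤ Q f}

/-- a precise probability tree compatible with the imprecise probability tree `Q`. -/
def Compat [Fintype X] (Q : List X → (X → ℝ) → ℝ) (p : List X → X → ℝ) : Prop :=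
  ∀ s : List X, p s ∈ credal (Q s)

/-- the global measure-theoretic upper expectation. -/
noncomputable def Emeas [Fintype X] (Q : List X → (X → ℝ) → ℝ)
    (P : (List X → X → ℝ) → List X → @Measure (ℕ → X) (cylSA X))
    (f : (ℕ → X) → EReal) (s : List X) : EReal :=
  sSup {y : EReal | ∃ p : List X → X → ℝ, Compat Q p ∧ y = upInt1 (P p s) f}

/-!
Since `liminf fₙ = ⨆ j, ⨅ k ≥ j, fₖ`, Fatou's lemma for `EV` follows from upward monotone
convergence: `EV (⨆ j, hⱼ) s ≤ ⨆ j, EV hⱼ s` for an increasing, uniformly bounded-below sequence.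
The process `P = ⨆ j, EV hⱼ` is a supermartingale, and along a path its `liminf` dominates
`⨆ j, hⱼ` unless, for some `j` and rationals `p < q`, `EV hⱼ` drops below `p` infinitely often
while `hⱼ > q`. On such a path the strategy that buys a superhedge of `hⱼ` worth `p` whenever
`EV hⱼ < p`, and sells it once it is worth more than `q`, completes infinitely many upcrossings,
so its capital tends to `+∞`. Scaling these countably many strategies to start with total capital
`ε` and adding them to `P` gives a superhedge of `⨆ j, hⱼ` starting below `⨆ j, EV hⱼ s + ε`.
-/

namespace IsCoherent

lemma le_of_forall_le [Fintype X] [Nonempty X] {Q : (X → ℝ) → ℝ} (hQ : IsCoherent Q)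
    {f : X → ℝ} {m : ℝ} (h : ∀ x, f x ≤ m) : Q f ≤ m :=
  (hQ.1 f).trans (ciSup_le h)

variable [Fintype X] [Nonempty X] {Q : (X → ℝ) → ℝ} (hQ : IsCoherent Q)
include hQ

lemma mono {f g : X → ℝ} (h : ∀ x, f x ≤ g x) : Q f ≤ Q g := by
  have hsum := hQ.2.1 g (fun x => f x - g x)
  have hdiff : Q (fun x => f x - g x) ≤ 0 := hQ.le_of_forall_le fun x => by linarith [h x]
  simp only [add_sub_cancel] at hsum
  linarith

lemma apply_const (r : ℝ) : Q (fun _ => r) = r := by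
  have hzero : Q (fun _ => 0) = 0 := by simpa using hQ.2.2 0 le_rfl (fun _ => 0)
  have hsum := hQ.2.1 (fun _ => r) (fun _ => -r)
  have hneg : Q (fun _ => -r) ≤ -r := hQ.le_of_forall_le fun _ => le_rfl
  simp only [add_neg_cancel, hzero] at hsum
  linarith [hQ.le_of_forall_le (f := fun _ => r) fun _ => le_rfl]

end IsCoherent

structure IsUpperCutExtension [Fintype X] (Q : (X → ℝ) → ℝ) (QE : (X → EReal) → EReal) :
    Prop where
  coherent : IsCoherent Q
  extendsLocal : ExtendsLocal Q QE
  upperCutCont : UpperCutCont QE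

lemma LocalExtension.isUpperCutExtension [Fintype X] {Q : List X → (X → ℝ) → ℝ}
    {Qe : List X → (X → EReal) → EReal} (hQ : ∀ s, IsCoherent (Q s))
    (hQe : LocalExtension Q Qe) (s : List X) : IsUpperCutExtension (Q s) (Qe s) :=
  ⟨hQ s, (hQe s).1, (hQe s).2.1⟩

lemma _root_.EReal.le_of_forall_pos_le_add {x y : EReal} (h : ∀ δ : ℝ, 0 < δ → y ≤ x + δ) :
    y ≤ x := by
  refine EReal.le_of_forall_lt_iff_le.1 fun z hz => ?_
  induction x using EReal.rec with
  | bot => exact (by simpa using h 1 one_pos : y = ⊥) ▸ bot_le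
  | coe r =>
    convert h (z - r) (sub_pos.2 (EReal.coe_lt_coe_iff.1 hz)) using 1
    rw [← EReal.coe_add, add_sub_cancel]
  | top => exact absurd hz (not_lt.2 le_top)

lemma min_add_le_add_min {α : Type*} [AddCommMonoid α] [LinearOrder α] [IsOrderedAddMonoid α]
    {a b c e : α} (ha : c ≤ a) (hb : c ≤ b) (he : c ≤ e) :
    min (a + b) (e + c) ≤ min a e + min b e := by
  rcases le_total a e with hae | hea
  · rcases le_total b e with hbe | heb
    · rw [min_eq_left hae, min_eq_left hbe]
      exact min_le_left _ _
    · rw [min_eq_right heb, add_comm e c]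
      exact (min_le_right _ _).trans (add_le_add (le_min ha he) le_rfl)
  · rw [min_eq_right hea]
    exact (min_le_right _ _).trans (add_le_add le_rfl (le_min hb he))

lemma coe_min_le_min {y : EReal} {c : ℝ} (hy : (c : EReal) ≤ y) (d : ℝ) :
    ((min c d : ℝ) : EReal) ≤ min y d :=
  le_min ((EReal.coe_le_coe_iff.2 (min_le_left _ _)).trans hy)
    (EReal.coe_le_coe_iff.2 (min_le_right _ _))

/-- `toReal` sends `±∞` to `0`, so this is the upper cut `min g d` only for bounded-below `g`
(`coe_truncation`). -/
noncomputable def truncation (g : X → EReal) (d : ℝ) : X → ℝ := fun x => (min (g x) d).toReal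

lemma coe_truncation {g : X → EReal} {c : ℝ} (hg : ∀ x, (c : EReal) ≤ g x) (d : ℝ) (x : X) :
    (truncation g d x : EReal) = min (g x) d :=
  EReal.coe_toReal ((min_le_right _ _).trans_lt (EReal.coe_lt_top d)).ne
    ((EReal.bot_lt_coe _).trans_le (coe_min_le_min (hg x) d)).ne'

namespace IsUpperCutExtension

variable [Fintype X] {Q : (X → ℝ) → ℝ} {QE : (X → EReal) → EReal}
  (hE : IsUpperCutExtension Q QE)
include hE

lemma apply_coe (f : X → ℝ) : QE (fun x => f x) = Q f := hE.extendsLocal f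

lemma apply_min {g : X → EReal} {c : ℝ} (hg : ∀ x, (c : EReal) ≤ g x) (d : ℝ) :
    QE (fun x => min (g x) d) = Q (truncation g d) := by
  simp_rw [← coe_truncation hg d]
  exact hE.apply_coe _

lemma tendsto_apply_min {g : X → EReal} {c : ℝ} (hg : ∀ x, (c : EReal) ≤ g x) :
    Tendsto (fun d : ℝ => QE (fun x => min (g x) d)) atTop (nhds (QE g)) :=
  hE.upperCutCont g ⟨c, hg⟩

variable [Nonempty X]

lemma apply_const (r : ℝ) : QE (fun _ => r) = r := by
  rw [hE.apply_coe (fun _ => r), hE.coherent.apply_const]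

lemma apply_min_mono {f g : X → EReal} {c₁ c₂ d₁ d₂ : ℝ} (hf : ∀ x, (c₁ : EReal) ≤ f x)
    (hg : ∀ x, (c₂ : EReal) ≤ g x) (h : ∀ x, min (f x) d₁ ≤ min (g x) d₂) :
    QE (fun x => min (f x) d₁) ≤ QE (fun x => min (g x) d₂) := by
  rw [hE.apply_min hf, hE.apply_min hg, EReal.coe_le_coe_iff]
  refine hE.coherent.mono fun x => ?_
  rw [← EReal.coe_le_coe_iff, coe_truncation hf, coe_truncation hg]
  exact h x

lemma apply_min_le {g : X → EReal} {c : ℝ} (hg : ∀ x, (c : EReal) ≤ g x) (d : ℝ) :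
    QE (fun x => min (g x) d) ≤ QE g :=
  Monotone.ge_of_tendsto (fun _ _ hd => hE.apply_min_mono hg hg fun _ =>
    min_le_min_left _ (EReal.coe_le_coe_iff.2 hd)) (hE.tendsto_apply_min hg) d

lemma mono {f g : X → EReal} {c : ℝ} (hf : ∀ x, (c : EReal) ≤ f x) (h : ∀ x, f x ≤ g x) :
    QE f ≤ QE g := by
  have hg x : (c : EReal) ≤ g x := (hf x).trans (h x)
  exact le_of_tendsto_of_tendsto' (hE.tendsto_apply_min hf) (hE.tendsto_apply_min hg) fun _ =>
    hE.apply_min_mono hf hg fun x => min_le_min_right _ (h x)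

lemma coe_le {g : X → EReal} {m : ℝ} (h : ∀ x, (m : EReal) ≤ g x) : (m : EReal) ≤ QE g := by
  simpa only [hE.apply_const] using hE.mono (fun _ => le_rfl) h

lemma exists_le (g : X → EReal) : ∃ x, g x ≤ QE g := by
  obtain ⟨x₀, hx₀⟩ := Finite.exists_min g
  exact ⟨x₀, EReal.ge_of_forall_gt_iff_ge.1 fun z hz => hE.coe_le fun x => hz.le.trans (hx₀ x)⟩

lemma add_le {f g : X → EReal} {c₁ c₂ : ℝ} (hf : ∀ x, (c₁ : EReal) ≤ f x)
    (hg : ∀ x, (c₂ : EReal) ≤ g x) : QE (fun x => f x + g x) ≤ QE f + QE g := by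
  set c := min c₁ c₂
  have hf' x : (c : EReal) ≤ f x := (EReal.coe_le_coe_iff.2 (min_le_left _ _)).trans (hf x)
  have hg' x : (c : EReal) ≤ g x := (EReal.coe_le_coe_iff.2 (min_le_right _ _)).trans (hg x)
  have hfg x : ((c + c : ℝ) : EReal) ≤ f x + g x := by
    rw [EReal.coe_add]
    exact add_le_add (hf' x) (hg' x)
  refine le_of_tendsto ((hE.tendsto_apply_min hfg).comp
    (tendsto_atTop_add_const_right atTop c tendsto_id)) (eventually_atTop.2 ⟨c, fun e he => ?_⟩)
  have hsplit x : min (f x + g x) ((e + c : ℝ) : EReal) ≤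
      ((truncation f e x + truncation g e x : ℝ) : EReal) := by
    rw [EReal.coe_add, EReal.coe_add, coe_truncation hf', coe_truncation hg']
    exact min_add_le_add_min (hf' x) (hg' x) (EReal.coe_le_coe_iff.2 he)
  calc QE (fun x => min (f x + g x) ((e + c : ℝ) : EReal))
      ≤ QE (fun x => ((truncation f e x + truncation g e x : ℝ) : EReal)) :=
        hE.mono (fun x => coe_min_le_min (hfg x) _) hsplit
    _ ≤ ((Q (truncation f e) + Q (truncation g e) : ℝ) : EReal) := by
        rw [hE.apply_coe, EReal.coe_le_coe_iff]
        exact hE.coherent.2.1 _ _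
    _ ≤ QE f + QE g := by
        rw [EReal.coe_add, ← hE.apply_min hf', ← hE.apply_min hg']
        exact add_le_add (hE.apply_min_le hf' e) (hE.apply_min_le hg' e)

lemma add_const_le {g : X → EReal} {c : ℝ} (hg : ∀ x, (c : EReal) ≤ g x) (r : ℝ) :
    QE (fun x => g x + r) ≤ QE g + r := by
  simpa only [hE.apply_const] using hE.add_le hg (fun _ => le_refl (r : EReal))

lemma smul_le {g : X → EReal} {c γ : ℝ} (hg : ∀ x, (c : EReal) ≤ g x) (hγ : 0 < γ) :
    QE (fun x => γ * g x) ≤ γ * QE g := by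
  have hγ' : (0 : EReal) ≤ γ := EReal.coe_nonneg.2 hγ.le
  have hγg x : ((γ * c : ℝ) : EReal) ≤ γ * g x := by
    rw [EReal.coe_mul]
    exact mul_le_mul_of_nonneg_left (hg x) hγ'
  refine le_of_tendsto' (hE.tendsto_apply_min hγg) fun d => ?_
  have hmin x : min ((γ : EReal) * g x) d = ((γ * truncation g (d / γ) x : ℝ) : EReal) := by
    rw [EReal.coe_mul, coe_truncation hg, (monotone_mul_left_of_nonneg hγ').map_min,
      ← EReal.coe_mul, mul_div_cancel₀ d hγ.ne']
  simp_rw [hmin]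
  rw [hE.apply_coe, hE.coherent.2.2 γ hγ.le, EReal.coe_mul, ← hE.apply_min hg]
  exact mul_le_mul_of_nonneg_left (hE.apply_min_le hg _) hγ'

lemma iSup_le {g : ℕ → X → EReal} {c : ℝ} (hmono : Monotone g)
    (hg : ∀ m x, (c : EReal) ≤ g m x) : QE (fun x => ⨆ m, g m x) ≤ ⨆ m, QE (g m) := by
  have hG x : (c : EReal) ≤ ⨆ m, g m x := (hg 0 x).trans (le_iSup (g · x) 0)
  refine le_of_tendsto' (hE.tendsto_apply_min hG) fun d => ?_
  refine EReal.le_of_forall_pos_le_add fun δ hδ => ?_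
  have hev x : ∀ᶠ m in atTop, min (⨆ m, g m x) d ≤ min (g m x) d + δ := by
    have hr := coe_truncation hG d x
    set r := truncation (fun x => ⨆ m, g m x) d x
    have hrd : r ≤ d := EReal.coe_le_coe_iff.1 (hr ▸ min_le_right _ _)
    obtain ⟨m₀, hm₀⟩ := lt_iSup_iff.1 ((EReal.coe_lt_coe_iff.2 (sub_lt_self r hδ)).trans_le
      (hr ▸ min_le_left _ _ : (r : EReal) ≤ ⨆ m, g m x))
    refine eventually_atTop.2 ⟨m₀, fun m hm => ?_⟩
    rw [← hr, ← sub_add_cancel r δ, EReal.coe_add]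
    exact add_le_add (le_min (hm₀.le.trans (hmono hm x))
      (EReal.coe_le_coe_iff.2 (by linarith))) le_rfl
  obtain ⟨m, hm⟩ := (eventually_all.2 hev).exists
  calc QE (fun x => min (⨆ m, g m x) d) ≤ QE (fun x => min (g m x) d + δ) :=
        hE.mono (fun x => coe_min_le_min (hG x) d) hm
    _ ≤ QE (fun x => min (g m x) d) + δ := hE.add_const_le (fun x => coe_min_le_min (hg m x) d) δ
    _ ≤ (⨆ m, QE (g m)) + δ :=
        add_le_add ((hE.apply_min_le (hg m) d).trans (le_iSup (fun m => QE (g m)) m)) le_rfl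

end IsUpperCutExtension

lemma length_pref (ω : ℕ → X) (n : ℕ) : (pref ω n).length = n := List.length_ofFn

lemma pref_succ (ω : ℕ → X) (n : ℕ) : pref ω (n + 1) = pref ω n ++ [ω n] := by
  rw [pref, List.ofFn_succ']
  simp [pref]

lemma pref_prefix_pref (ω : ℕ → X) {n m : ℕ} (h : n ≤ m) : pref ω n <+: pref ω m := by
  induction h with
  | refl => exact List.prefix_refl _
  | step _ ih => exact ih.trans (pref_succ ω _ ▸ List.prefix_append _ _)

lemma prefix_pref_iff_mem_cyl {ω : ℕ → X} {u : List X} {m : ℕ} (hm : u.length ≤ m) :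
    u <+: pref ω m ↔ ω ∈ cyl u := by
  refine ⟨fun h => ?_, fun h => h ▸ pref_prefix_pref ω hm⟩
  have hu : u <+: pref ω u.length :=
    List.prefix_of_prefix_length_le h (pref_prefix_pref ω hm) (by rw [length_pref])
  exact (hu.eq_of_length (length_pref ω _).symm).symm

lemma cyl_subset_cyl {t u : List X} (h : t <+: u) : cyl u ⊆ cyl t := fun ω hω =>
  (prefix_pref_iff_mem_cyl h.length_le).1 (by rwa [← hω] at h)

lemma exists_forall_mem_cyl [Nonempty X] (l : ℕ → List X) (hl : ∀ n, l n <+: l (n + 1))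
    (hlen : ∀ n, n ≤ (l n).length) : ∃ ω : ℕ → X, ∀ n, ω ∈ cyl (l n) := by
  have hmono : ∀ {n m}, n ≤ m → l n <+: l m := fun h => by
    induction h with
    | refl => exact List.prefix_refl _
    | step _ ih => exact ih.trans (hl _)
  refine ⟨fun i => nthL (l (i + 1)) i, fun n => List.ext_getElem (length_pref _ _) ?_⟩
  intro i hi hin
  have hi' : i < (l (i + 1)).length := hlen (i + 1)
  simp only [pref, List.getElem_ofFn, nthL, List.getD_eq_getElem _ _ hi']
  rcases le_total (i + 1) n with h | h
  · exact (hmono h).getElem hi'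
  · exact ((hmono h).getElem hin).symm

/-- The processes over which `EV Qe f s` takes its infimum. -/
def Superhedges (Qe : List X → (X → EReal) → EReal) (f : (ℕ → X) → EReal) (s : List X)
    (M : List X → EReal) : Prop :=
  MBddBelow M ∧ IsSupermart Qe M ∧ ∀ ω ∈ cyl s, f ω ≤ liminf (fun n => M (pref ω n)) atTop

lemma EV_le {Qe : List X → (X → EReal) → EReal} {f : (ℕ → X) → EReal} {t : List X}
    {M : List X → EReal} (hM : Superhedges Qe f t M) : EV Qe f t ≤ M t :=
  sInf_le ⟨M, hM.1, hM.2.1, hM.2.2, rfl⟩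

lemma exists_superhedges_lt {Qe : List X → (X → EReal) → EReal} {f : (ℕ → X) → EReal}
    {t : List X} {a : EReal} (h : EV Qe f t < a) : ∃ M, Superhedges Qe f t M ∧ M t < a := by
  obtain ⟨_, ⟨M, hb, hs, hd, rfl⟩, hlt⟩ := sInf_lt_iff.1 h
  exact ⟨M, ⟨hb, hs, hd⟩, hlt⟩

lemma EV_mono {Qe : List X → (X → EReal) → EReal} {f g : (ℕ → X) → EReal}
    (h : ∀ ω, f ω ≤ g ω) (t : List X) : EV Qe f t ≤ EV Qe g t :=
  sInf_le_sInf fun _ ⟨M, hb, hs, hd, hM⟩ => ⟨M, hb, hs, fun ω hω => (h ω).trans (hd ω hω), hM⟩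

section Supermartingales

variable [Fintype X] [Nonempty X] {Q : List X → (X → ℝ) → ℝ} {Qe : List X → (X → EReal) → EReal}
  (hE : ∀ t, IsUpperCutExtension (Q t) (Qe t))
include hE

lemma IsSupermart.exists_liminf_le {M : List X → EReal} (hM : IsSupermart Qe M) (u : List X) :
    ∃ ω ∈ cyl u, liminf (fun n => M (pref ω n)) atTop ≤ M u := by
  have hstep v : ∃ x, M (v ++ [x]) ≤ M v := ((hE v).exists_le _).imp fun _ hx => hx.trans (hM v)
  choose next hnext using hstep
  let l : ℕ → List X := fun n => Nat.rec u (fun _ v => v ++ [next v]) n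
  have hl n : l (n + 1) = l n ++ [next (l n)] := rfl
  have hlen n : (l n).length = u.length + n := by
    induction n with
    | zero => rfl
    | succ n ih => rw [hl, List.length_append, ih, List.length_singleton, add_assoc]
  have hle n : M (l n) ≤ M u := by
    induction n with
    | zero => exact le_rfl
    | succ n ih => exact (hl n ▸ hnext (l n)).trans ih
  obtain ⟨ω, hω⟩ := exists_forall_mem_cyl l (fun n => hl n ▸ List.prefix_append _ _)
    (fun n => by rw [hlen]; omega)
  refine ⟨ω, hω 0, liminf_le_of_frequently_le' (frequently_atTop.2 fun n => ?_)⟩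
  refine ⟨u.length + n, Nat.le_add_left _ _, ?_⟩
  rw [← hlen, hω n]
  exact hle n

lemma Superhedges.coe_le {f : (ℕ → X) → EReal} {c : ℝ} (hf : ∀ ω, (c : EReal) ≤ f ω)
    {t u : List X} {M : List X → EReal} (hM : Superhedges Qe f t M) (htu : t <+: u) :
    (c : EReal) ≤ M u := by
  obtain ⟨ω, hω, hlim⟩ := hM.2.1.exists_liminf_le hE u
  exact (hf ω).trans ((hM.2.2 ω (cyl_subset_cyl htu hω)).trans hlim)

lemma coe_le_EV {f : (ℕ → X) → EReal} {c : ℝ} (hf : ∀ ω, (c : EReal) ≤ f ω) (t : List X) :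
    (c : EReal) ≤ EV Qe f t := by
  refine le_sInf ?_
  rintro _ ⟨M, hb, hs, hd, rfl⟩
  exact Superhedges.coe_le hE hf ⟨hb, hs, hd⟩ (List.prefix_refl t)

lemma isSupermart_EV {f : (ℕ → X) → EReal} {c : ℝ} (hf : ∀ ω, (c : EReal) ≤ f ω) :
    IsSupermart Qe (EV Qe f) := by
  refine fun t => le_sInf ?_
  rintro _ ⟨M, hb, hs, hd, rfl⟩
  have hchild x : EV Qe f (t ++ [x]) ≤ M (t ++ [x]) :=
    EV_le ⟨hb, hs, fun ω hω => hd ω (cyl_subset_cyl (List.prefix_append _ _) hω)⟩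
  exact ((hE t).mono (fun x => coe_le_EV hE hf _) hchild).trans (hs t)

lemma isSupermart_const (r : ℝ) : IsSupermart Qe (fun _ => (r : EReal)) := fun t =>
  ((hE t).apply_const r).le

lemma IsSupermart.add {M N : List X → EReal} (hM : IsSupermart Qe M) (hN : IsSupermart Qe N)
    {c₁ c₂ : ℝ} (hcM : ∀ t, (c₁ : EReal) ≤ M t) (hcN : ∀ t, (c₂ : EReal) ≤ N t) :
    IsSupermart Qe (fun t => M t + N t) := fun t =>
  ((hE t).add_le (fun _ => hcM _) (fun _ => hcN _)).trans (add_le_add (hM t) (hN t))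

lemma IsSupermart.add_const {M : List X → EReal} (hM : IsSupermart Qe M) {c : ℝ}
    (hc : ∀ t, (c : EReal) ≤ M t) (r : ℝ) : IsSupermart Qe (fun t => M t + r) :=
  hM.add hE (isSupermart_const hE r) hc (fun _ => le_refl (r : EReal))

lemma IsSupermart.const_mul {M : List X → EReal} (hM : IsSupermart Qe M) {c γ : ℝ}
    (hc : ∀ t, (c : EReal) ≤ M t) (hγ : 0 < γ) : IsSupermart Qe (fun t => γ * M t) := fun t =>
  ((hE t).smul_le (fun _ => hc _) hγ).trans
    (mul_le_mul_of_nonneg_left (hM t) (EReal.coe_nonneg.2 hγ.le))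

lemma isSupermart_iSup {M : ℕ → List X → EReal} (hmono : Monotone M) {c : ℝ}
    (hc : ∀ m t, (c : EReal) ≤ M m t) (hM : ∀ m, IsSupermart Qe (M m)) :
    IsSupermart Qe (fun t => ⨆ m, M m t) := fun t =>
  ((hE t).iSup_le (g := fun m x => M m (t ++ [x])) (fun _ _ h _ => hmono h _)
    (fun m _ => hc m _)).trans
    (iSup_mono fun m => hM m t)

lemma isSupermart_iSup_sum {D : ℕ → List X → EReal} (hD : ∀ n, IsSupermart Qe (D n))
    (hnn : ∀ n t, 0 ≤ D n t) : IsSupermart Qe (fun t => ⨆ m, ∑ n ∈ Finset.range m, D n t) := by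
  have hS m : IsSupermart Qe (fun t => ∑ n ∈ Finset.range m, D n t) := by
    induction m with
    | zero => simpa using isSupermart_const hE 0
    | succ m ih =>
      simp only [Finset.sum_range_succ]
      exact ih.add hE (hD m) (c₁ := 0) (c₂ := 0) (fun t => Finset.sum_nonneg fun n _ => hnn n t)
        (hnn m)
  exact isSupermart_iSup hE (monotone_nat_of_le_succ fun m t => by
      simpa only [Finset.sum_range_succ] using le_add_of_nonneg_right (hnn m t)) (c := 0)
    (fun m t => Finset.sum_nonneg fun n _ => hnn n t) hS

lemma exists_superhedges_eq {f : (ℕ → X) → EReal} {c a : ℝ} (hf : ∀ ω, (c : EReal) ≤ f ω)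
    {u : List X} (h : EV Qe f u < a) : ∃ M, Superhedges Qe f u M ∧ M u = a := by
  obtain ⟨M, hM, hMu⟩ := exists_superhedges_lt h
  obtain ⟨r, hr⟩ : ∃ r : ℝ, M u = r := ⟨(M u).toReal, (EReal.coe_toReal
    (hMu.trans (EReal.coe_lt_top a)).ne
    ((EReal.bot_lt_coe c).trans_le (hM.coe_le hE hf (List.prefix_refl u))).ne').symm⟩
  have hra : 0 ≤ a - r := sub_nonneg.2 (EReal.coe_le_coe_iff.1 (hr ▸ hMu.le))
  obtain ⟨b, hb⟩ := hM.1
  refine ⟨fun t => M t + (a - r : ℝ), ⟨⟨b + (a - r), fun t => ?_⟩, hM.2.1.add_const hE hb _,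
    fun ω hω => (hM.2.2 ω hω).trans (liminf_le_liminf (Eventually.of_forall fun n =>
      le_add_of_nonneg_right (EReal.coe_nonneg.2 hra)))⟩, ?_⟩
  · rw [EReal.coe_add]
    exact add_le_add (hb t) le_rfl
  · simp only [hr, ← EReal.coe_add, add_sub_cancel]

end Supermartingales

lemma exists_gt_of_persist_or {p q : ℕ → Prop} {m N : ℕ} (hm : p m) (hmN : m ≤ N)
    (hstep : ∀ j, p j → p (j + 1) ∨ q (j + 1)) (hN : p N → q (N + 1)) : ∃ j, m < j ∧ q j := by
  by_contra! h
  have hp : ∀ j, m ≤ j → p j := fun j hj => by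
    induction j, hj using Nat.le_induction with
    | base => exact hm
    | succ j hj ih => exact (hstep j ih).resolve_right (h _ (by omega))
  exact h (N + 1) (by omega) (hN (hp N hmN))

section Upcrossing

variable (Qe : List X → (X → EReal) → EReal) (f : (ℕ → X) → EReal) (a b : ℝ) (s : List X)

/-- Junk unless `EV Qe f u < a`, when it superhedges `f` from `u` with value `a` at `u`
(`hedge_spec`). -/
noncomputable def hedge (u : List X) : List X → EReal :=
  if h : ∃ M, Superhedges Qe f u M ∧ M u = a then h.choose else fun _ => a

/-- One step, at situation `t`, of the strategy that buys the hedge of `f` when `EV Qe f` drops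
below `a` in a situation extending `s`, and sells it once it is worth more than `b`. A state
records the number of completed upcrossings and where the hedge held, if any, was bought. -/
noncomputable def upcrossingStep (t : List X) : ℕ × Option (List X) → ℕ × Option (List X)
  | (k, none) => if s <+: t ∧ EV Qe f t < a then (k, some t) else (k, none)
  | (k, some u) => if b < hedge Qe f a u t then (k + 1, none) else (k, some u)

noncomputable def upcrossingState (t : List X) : ℕ × Option (List X) :=
  t.inits.foldl (fun σ v => upcrossingStep Qe f a b s v σ) (0, none)

noncomputable def positionValue (t : List X) : ℕ × Option (List X) → EReal
  | (k, none) => ((k * (b - a) + a : ℝ) : EReal)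
  | (k, some u) => hedge Qe f a u t + (k * (b - a) : ℝ)

noncomputable def upcrossingCapital (t : List X) : EReal :=
  positionValue Qe f a b t (upcrossingState Qe f a b s t)

variable {Qe f a b s}

lemma upcrossingState_nil :
    upcrossingState Qe f a b s [] = upcrossingStep Qe f a b s [] (0, none) := rfl

lemma upcrossingState_append (t : List X) (x : X) :
    upcrossingState Qe f a b s (t ++ [x]) =
      upcrossingStep Qe f a b s (t ++ [x]) (upcrossingState Qe f a b s t) := by
  simp [upcrossingState, List.inits_append, List.foldl_append]

lemma upcrossingState_pref_succ (ω : ℕ → X) (m : ℕ) :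
    upcrossingState Qe f a b s (pref ω (m + 1)) =
      upcrossingStep Qe f a b s (pref ω (m + 1)) (upcrossingState Qe f a b s (pref ω m)) := by
  rw [pref_succ, upcrossingState_append]

lemma upcrossingState_of_not_prefix {t : List X} (h : ¬ s <+: t) :
    upcrossingState Qe f a b s t = (0, none) := by
  induction t using List.reverseRecOn with
  | nil => simp [upcrossingState_nil, upcrossingStep, h]
  | append_singleton t x ih =>
    rw [upcrossingState_append, ih fun h' => h (h'.trans (List.prefix_append _ _))]
    simp [upcrossingStep, h]

lemma upcrossingState_self :
    upcrossingState Qe f a b s s = upcrossingStep Qe f a b s s (0, none) := by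
  rcases List.eq_nil_or_concat s with rfl | ⟨s', x, rfl⟩
  · rfl
  · rw [List.concat_eq_append, upcrossingState_append, upcrossingState_of_not_prefix]
    intro h
    simpa using h.length_le

lemma le_upcrossingStep_fst (t : List X) (σ : ℕ × Option (List X)) :
    σ.1 ≤ (upcrossingStep Qe f a b s t σ).1 := by
  rcases σ with ⟨k, _ | u⟩ <;> simp only [upcrossingStep] <;> split_ifs <;> simp

lemma mem_upcrossingStep_snd {t u : List X} {σ : ℕ × Option (List X)}
    (hu : u ∈ (upcrossingStep Qe f a b s t σ).2) : u = t ∧ EV Qe f t < a ∨ u ∈ σ.2 := by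
  rcases σ with ⟨k, _ | u'⟩ <;> simp only [upcrossingStep] at hu <;> split_ifs at hu with h <;>
    simp_all

lemma upcrossingState_held {t u : List X} (hu : u ∈ (upcrossingState Qe f a b s t).2) :
    u <+: t ∧ EV Qe f u < a := by
  induction t using List.reverseRecOn with
  | nil =>
    rw [upcrossingState_nil] at hu
    rcases mem_upcrossingStep_snd hu with ⟨rfl, h⟩ | h
    · exact ⟨List.prefix_refl _, h⟩
    · simp at h
  | append_singleton t x ih =>
    rw [upcrossingState_append] at hu
    rcases mem_upcrossingStep_snd hu with ⟨rfl, h⟩ | h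
    · exact ⟨List.prefix_refl _, h⟩
    · exact (ih h).imp_left fun h' => h'.trans (List.prefix_append _ _)

lemma exists_upcrossingState_buy {ω : ℕ → X} (hω : ω ∈ cyl s)
    (hdip : ∃ᶠ m in atTop, EV Qe f (pref ω m) < a) {m k : ℕ}
    (hm : upcrossingState Qe f a b s (pref ω m) = (k, none)) :
    ∃ j, m < j ∧ ∃ u, upcrossingState Qe f a b s (pref ω j) = (k, some u) := by
  obtain ⟨j, hj, hjm⟩ := (hdip.and_eventually (eventually_gt_atTop (max m s.length))).exists
  obtain ⟨N, rfl⟩ : ∃ N, j = N + 1 := ⟨j - 1, by omega⟩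
  refine exists_gt_of_persist_or (p := fun j => upcrossingState Qe f a b s (pref ω j) = (k, none))
    (N := N) hm (by omega) (fun j hj => ?_) (fun hN => ?_)
  · rw [upcrossingState_pref_succ, hj, upcrossingStep]
    split_ifs <;> simp
  · rw [upcrossingState_pref_succ, hN, upcrossingStep,
      if_pos ⟨(prefix_pref_iff_mem_cyl (by omega)).2 hω, hj⟩]
    exact ⟨_, rfl⟩

variable [Fintype X] [Nonempty X] {Q : List X → (X → ℝ) → ℝ}
  (hE : ∀ t, IsUpperCutExtension (Q t) (Qe t)) {c : ℝ} (hf : ∀ ω, (c : EReal) ≤ f ω)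
include hE hf

lemma hedge_spec {u : List X} (h : EV Qe f u < a) :
    Superhedges Qe f u (hedge Qe f a u) ∧ hedge Qe f a u u = a := by
  have hex := exists_superhedges_eq hE hf h
  rw [hedge, dif_pos hex]
  exact hex.choose_spec

lemma coe_add_le_positionValue (hca : c < a) {t : List X} {σ : ℕ × Option (List X)}
    (hσ : ∀ u ∈ σ.2, u <+: t ∧ EV Qe f u < a) :
    ((c + σ.1 * (b - a) : ℝ) : EReal) ≤ positionValue Qe f a b t σ := by
  rcases σ with ⟨k, _ | u⟩
  · exact EReal.coe_le_coe_iff.2 (by simp only; linarith)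
  · obtain ⟨hut, hu⟩ := hσ u rfl
    rw [positionValue, EReal.coe_add]
    exact add_le_add ((hedge_spec hE hf hu).1.coe_le hE hf hut) le_rfl

lemma positionValue_upcrossingStep_le (t : List X) (σ : ℕ × Option (List X)) :
    positionValue Qe f a b t (upcrossingStep Qe f a b s t σ) ≤ positionValue Qe f a b t σ := by
  rcases σ with ⟨k, _ | u⟩ <;> simp only [upcrossingStep] <;> split_ifs with h
  · rw [positionValue, positionValue, (hedge_spec hE hf h.2).2, ← EReal.coe_add, add_comm]
  · exact le_rfl
  · rw [positionValue, positionValue, ← sub_add_cancel (((k + 1 : ℕ) : ℝ) * (b - a) + a) b,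
      EReal.coe_add, add_comm]
    refine add_le_add h.le (EReal.coe_le_coe_iff.2 (le_of_eq ?_))
    push_cast
    ring
  · exact le_rfl

lemma positionValue_supermart {t : List X} {σ : ℕ × Option (List X)}
    (hσ : ∀ u ∈ σ.2, u <+: t ∧ EV Qe f u < a) :
    Qe t (fun x => positionValue Qe f a b (t ++ [x]) σ) ≤ positionValue Qe f a b t σ := by
  rcases σ with ⟨k, _ | u⟩
  · exact ((hE t).apply_const _).le
  · obtain ⟨hut, hu⟩ := hσ u rfl
    have hH := (hedge_spec hE hf hu).1
    exact ((hE t).add_const_le (fun x => hH.coe_le hE hf (hut.trans (List.prefix_append _ _)))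
      _).trans (add_le_add (hH.2.1 t) le_rfl)

lemma coe_add_le_upcrossingCapital (hca : c < a) (t : List X) :
    ((c + (upcrossingState Qe f a b s t).1 * (b - a) : ℝ) : EReal) ≤
      upcrossingCapital Qe f a b s t :=
  coe_add_le_positionValue hE hf hca fun _ hu => upcrossingState_held hu

lemma coe_le_upcrossingCapital (hca : c < a) (hab : a < b) (t : List X) :
    (c : EReal) ≤ upcrossingCapital Qe f a b s t :=
  (EReal.coe_le_coe_iff.2 (le_add_of_nonneg_right (by
    have : 0 ≤ b - a := by linarith
    positivity))).trans (coe_add_le_upcrossingCapital hE hf hca t)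

lemma upcrossingCapital_self_le : upcrossingCapital Qe f a b s s ≤ a := by
  rw [upcrossingCapital, upcrossingState_self]
  refine (positionValue_upcrossingStep_le hE hf s _).trans (le_of_eq ?_)
  simp [positionValue]

lemma isSupermart_upcrossingCapital (hca : c < a) (hab : a < b) :
    IsSupermart Qe (upcrossingCapital Qe f a b s) := by
  intro t
  simp only [upcrossingCapital, upcrossingState_append]
  calc Qe t (fun x => positionValue Qe f a b (t ++ [x])
        (upcrossingStep Qe f a b s (t ++ [x]) (upcrossingState Qe f a b s t)))
      ≤ Qe t (fun x => positionValue Qe f a b (t ++ [x]) (upcrossingState Qe f a b s t)) :=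
        (hE t).mono (fun x => by simpa only [upcrossingCapital, upcrossingState_append] using
          coe_le_upcrossingCapital hE hf hca hab (s := s) (t ++ [x]))
          fun x => positionValue_upcrossingStep_le hE hf _ _
    _ ≤ _ := positionValue_supermart hE hf fun _ hu => upcrossingState_held hu

lemma exists_upcrossingState_sell {ω : ℕ → X} (hfω : (b : EReal) < f ω) {m k : ℕ} {u : List X}
    (hm : upcrossingState Qe f a b s (pref ω m) = (k, some u)) :
    ∃ j, m < j ∧ upcrossingState Qe f a b s (pref ω j) = (k + 1, none) := by
  have hmem : u ∈ (upcrossingState Qe f a b s (pref ω m)).2 := by simp [hm]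
  obtain ⟨hum, hu⟩ := upcrossingState_held hmem
  have hωu : ω ∈ cyl u := (prefix_pref_iff_mem_cyl (length_pref ω m ▸ hum.length_le)).1 hum
  have hsell : ∀ᶠ j in atTop, (b : EReal) < hedge Qe f a u (pref ω j) :=
    eventually_lt_of_lt_liminf (hfω.trans_le ((hedge_spec hE hf hu).1.2.2 ω hωu))
  obtain ⟨N, hN⟩ := eventually_atTop.1 hsell
  refine exists_gt_of_persist_or
    (p := fun j => upcrossingState Qe f a b s (pref ω j) = (k, some u)) hm (le_max_left m N)
    (fun j hj => ?_) (fun hj => ?_)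
  · rw [upcrossingState_pref_succ, hj, upcrossingStep]
    split_ifs <;> simp
  · rw [upcrossingState_pref_succ, hj, upcrossingStep, if_pos (hN _ (by omega))]

lemma tendsto_upcrossingCount {ω : ℕ → X} (hω : ω ∈ cyl s)
    (hdip : ∃ᶠ m in atTop, EV Qe f (pref ω m) < a) (hfω : (b : EReal) < f ω) :
    Tendsto (fun m => (upcrossingState Qe f a b s (pref ω m)).1) atTop atTop := by
  have hup m : ∃ j, (upcrossingState Qe f a b s (pref ω m)).1 <
      (upcrossingState Qe f a b s (pref ω j)).1 := by
    rcases hm : upcrossingState Qe f a b s (pref ω m) with ⟨k, _ | u⟩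
    · obtain ⟨j, -, u, hj⟩ := exists_upcrossingState_buy hω hdip hm
      obtain ⟨j', -, hj'⟩ := exists_upcrossingState_sell hE hf hfω hj
      exact ⟨j', by simp [hj']⟩
    · obtain ⟨j, -, hj⟩ := exists_upcrossingState_sell hE hf hfω hm
      exact ⟨j, by simp [hj]⟩
  refine tendsto_atTop_atTop_of_monotone (monotone_nat_of_le_succ fun m => ?_) fun K => ?_
  · rw [upcrossingState_pref_succ]
    exact le_upcrossingStep_fst _ _
  · induction K with
    | zero => exact ⟨0, Nat.zero_le _⟩
    | succ K ih =>
      obtain ⟨m, hm⟩ := ih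
      obtain ⟨j, hj⟩ := hup m
      exact ⟨j, by omega⟩

variable (s) in
theorem exists_nonneg_supermart_tendsto_top (hca : c < a) (hab : a < b) {w : ℝ} (hw : 0 < w) :
    ∃ D : List X → EReal, IsSupermart Qe D ∧ (∀ t, 0 ≤ D t) ∧ D s ≤ w ∧
      ∀ ω ∈ cyl s, (∃ᶠ m in atTop, EV Qe f (pref ω m) < a) → (b : EReal) < f ω →
        Tendsto (fun m => D (pref ω m)) atTop (nhds ⊤) := by
  obtain ⟨γ, hγ, hγw⟩ : ∃ γ : ℝ, 0 < γ ∧ γ * (a - c) = w :=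
    ⟨w / (a - c), div_pos hw (sub_pos.2 hca), div_mul_cancel₀ w (sub_pos.2 hca).ne'⟩
  have hγ' : (0 : EReal) ≤ γ := EReal.coe_nonneg.2 hγ.le
  have hcap := coe_le_upcrossingCapital hE hf hca hab (s := s)
  have hshift t : (0 : EReal) ≤ upcrossingCapital Qe f a b s t + (-c : ℝ) := by
    have h := add_le_add (hcap t) (le_refl ((-c : ℝ) : EReal))
    rwa [← EReal.coe_add, add_neg_cancel, EReal.coe_zero] at h
  refine ⟨fun t => γ * (upcrossingCapital Qe f a b s t + (-c : ℝ)),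
    ((isSupermart_upcrossingCapital hE hf hca hab).add_const hE hcap _).const_mul hE hshift hγ,
    fun t => mul_nonneg hγ' (hshift t), ?_, fun ω hω hdip hfω => ?_⟩
  · calc (γ : EReal) * (upcrossingCapital Qe f a b s s + (-c : ℝ))
        ≤ γ * ((a : EReal) + (-c : ℝ)) :=
          mul_le_mul_of_nonneg_left (add_le_add (upcrossingCapital_self_le hE hf) le_rfl) hγ'
      _ = w := by
          rw [← EReal.coe_add, ← EReal.coe_mul, ← sub_eq_add_neg, hγw]
  · set K := fun m => (upcrossingState Qe f a b s (pref ω m)).1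
    have hlow m : ((γ * (K m * (b - a)) : ℝ) : EReal) ≤
        γ * (upcrossingCapital Qe f a b s (pref ω m) + (-c : ℝ)) := by
      rw [EReal.coe_mul]
      refine mul_le_mul_of_nonneg_left ?_ hγ'
      have h := add_le_add (coe_add_le_upcrossingCapital hE hf hca (b := b) (s := s) (pref ω m))
        (le_refl ((-c : ℝ) : EReal))
      rwa [← EReal.coe_add, add_neg_cancel_comm] at h
    refine tendsto_nhds_top_mono' (EReal.tendsto_coe_nhds_top_iff.2 ?_) hlow
    exact ((tendsto_natCast_atTop_atTop.comp (tendsto_upcrossingCount hE hf hω hdip hfω)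
      ).atTop_mul_const (sub_pos.2 hab)).const_mul_atTop hγ

end Upcrossing

lemma exists_rat_frequently_lt_of_liminf_lt {u : ℕ → EReal} {x : EReal} {c : ℝ}
    (hc : ∀ n, (c : EReal) ≤ u n) (h : liminf u atTop < x) :
    ∃ p q : ℚ, c < p ∧ p < q ∧ (∃ᶠ n in atTop, u n < (p : ℝ)) ∧ ((q : ℝ) : EReal) < x := by
  obtain ⟨y₁, hy₁, hy₁x⟩ := EReal.exists_between_coe_real h
  obtain ⟨y₂, hy₁₂, hy₂⟩ := EReal.exists_between_coe_real hy₁x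
  obtain ⟨p, hp₁, hp₂⟩ := exists_rat_btwn (EReal.coe_lt_coe_iff.1 hy₁₂)
  obtain ⟨q, hpq, hq⟩ := exists_rat_btwn hp₂
  have hcy₁ : (c : EReal) < y₁ :=
    (le_liminf_of_le (by isBoundedDefault) (Eventually.of_forall hc)).trans_lt hy₁
  refine ⟨p, q, (EReal.coe_lt_coe_iff.1 hcy₁).trans hp₁, by exact_mod_cast hpq,
    frequently_lt_of_liminf_lt (by isBoundedDefault) (hy₁.trans (EReal.coe_lt_coe_iff.2 hp₁)),
    (EReal.coe_lt_coe_iff.2 hq).trans hy₂⟩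

section Convergence

variable [Fintype X] [Nonempty X] {Q : List X → (X → ℝ) → ℝ} {Qe : List X → (X → EReal) → EReal}
  (hE : ∀ t, IsUpperCutExtension (Q t) (Qe t))
include hE

theorem exists_nonneg_supermart_tendsto_top_iUnion {ι : Type*} [Encodable ι] (s : List X)
    (A : ι → Set (ℕ → X))
    (hA : ∀ i, ∀ w : ℝ, 0 < w → ∃ D : List X → EReal, IsSupermart Qe D ∧ (∀ t, 0 ≤ D t) ∧
      D s ≤ w ∧ ∀ ω ∈ A i, Tendsto (fun m => D (pref ω m)) atTop (nhds ⊤))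
    {ε : ℝ} (hε : 0 < ε) :
    ∃ T : List X → EReal, IsSupermart Qe T ∧ (∀ t, 0 ≤ T t) ∧ T s ≤ ε ∧
      ∀ ω ∈ ⋃ i, A i, Tendsto (fun m => T (pref ω m)) atTop (nhds ⊤) := by
  have hD n : ∃ D : List X → EReal, IsSupermart Qe D ∧ (∀ t, 0 ≤ D t) ∧
      D s ≤ (ε / 2 ^ (n + 1) : ℝ) ∧ ∀ i ∈ Encodable.decode (α := ι) n, ∀ ω ∈ A i,
        Tendsto (fun m => D (pref ω m)) atTop (nhds ⊤) := by
    rcases Encodable.decode (α := ι) n with _ | i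
    · exact ⟨fun _ => (0 : ℝ), isSupermart_const hE 0, fun _ => le_rfl,
        EReal.coe_le_coe_iff.2 (by positivity), by simp⟩
    · obtain ⟨D, hDsm, hDnn, hDs, hDlim⟩ := hA i (ε / 2 ^ (n + 1)) (by positivity)
      exact ⟨D, hDsm, hDnn, hDs, fun i' hi' => Option.mem_some_iff.1 hi' ▸ hDlim⟩
  choose D hDsm hDnn hDs hDlim using hD
  have hSs m : ∑ n ∈ Finset.range m, D n s ≤ (ε - ε / 2 ^ m : ℝ) := by
    induction m with
    | zero => simp
    | succ m ih =>
      rw [Finset.sum_range_succ]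
      refine (add_le_add ih (hDs m)).trans (le_of_eq ?_)
      rw [← EReal.coe_add]
      congr 1
      ring
  refine ⟨fun t => ⨆ m, ∑ n ∈ Finset.range m, D n t, isSupermart_iSup_sum hE hDsm hDnn,
    fun t => le_iSup_of_le 0 (by simp),
    iSup_le fun m => (hSs m).trans (EReal.coe_le_coe_iff.2 (sub_le_self _ (by positivity))),
    fun ω hω => ?_⟩
  obtain ⟨i, hi⟩ := Set.mem_iUnion.1 hω
  refine tendsto_nhds_top_mono' (hDlim _ i (Encodable.encodek i) ω hi) fun m => ?_
  exact (Finset.single_le_sum (fun n _ => hDnn n _) (Finset.self_mem_range_succ _)).trans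
    (le_iSup (fun m' => ∑ n ∈ Finset.range m', D n (pref ω m)) _)

lemma le_liminf_iSup_EV_or_exists_rat {h : ℕ → (ℕ → X) → EReal} {c : ℝ}
    (hc : ∀ j ω, (c : EReal) ≤ h j ω) (ω : ℕ → X) :
    ⨆ j, h j ω ≤ liminf (fun m => ⨆ j, EV Qe (h j) (pref ω m)) atTop ∨
      ∃ (j : ℕ) (p q : ℚ), c < p ∧ p < q ∧ (∃ᶠ m in atTop, EV Qe (h j) (pref ω m) < (p : ℝ)) ∧
        ((q : ℝ) : EReal) < h j ω := by
  refine or_iff_not_imp_left.2 fun hlt => ?_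
  obtain ⟨j, hj⟩ := lt_iSup_iff.1 (not_le.1 hlt)
  exact ⟨j, exists_rat_frequently_lt_of_liminf_lt (fun m => coe_le_EV hE (hc j) (pref ω m))
    ((liminf_le_liminf (Eventually.of_forall fun m =>
      le_iSup (fun j => EV Qe (h j) (pref ω m)) j)).trans_lt hj)⟩

theorem EV_iSup_le {h : ℕ → (ℕ → X) → EReal} (hmono : Monotone h) {c : ℝ}
    (hc : ∀ j ω, (c : EReal) ≤ h j ω) (s : List X) :
    EV Qe (fun ω => ⨆ j, h j ω) s ≤ ⨆ j, EV Qe (h j) s := by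
  set P : List X → EReal := fun t => ⨆ j, EV Qe (h j) t
  have hPc t : (c : EReal) ≤ P t :=
    (coe_le_EV hE (hc 0) t).trans (le_iSup (fun j => EV Qe (h j) t) 0)
  have hPsm : IsSupermart Qe P :=
    isSupermart_iSup hE (fun _ _ hjk => EV_mono fun ω => hmono hjk ω)
      (fun j => coe_le_EV hE (hc j)) fun j => isSupermart_EV hE (hc j)
  let A : {i : ℕ × ℚ × ℚ // c < i.2.1 ∧ i.2.1 < i.2.2} → Set (ℕ → X) := fun i =>
    {ω | ω ∈ cyl s ∧ (∃ᶠ m in atTop, EV Qe (h i.1.1) (pref ω m) < (i.1.2.1 : ℝ)) ∧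
      ((i.1.2.2 : ℝ) : EReal) < h i.1.1 ω}
  have hA i (w : ℝ) (hw : 0 < w) : ∃ D : List X → EReal, IsSupermart Qe D ∧ (∀ t, 0 ≤ D t) ∧
      D s ≤ w ∧ ∀ ω ∈ A i, Tendsto (fun m => D (pref ω m)) atTop (nhds ⊤) :=
    (exists_nonneg_supermart_tendsto_top s hE (hc i.1.1) i.2.1 (by exact_mod_cast i.2.2) hw).imp
      fun _ hD => ⟨hD.1, hD.2.1, hD.2.2.1, fun ω hω => hD.2.2.2 ω hω.1 hω.2.1 hω.2.2⟩
  refine EReal.le_of_forall_lt_iff_le.1 fun z hz => ?_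
  obtain ⟨α, hα, hαz⟩ := EReal.exists_between_coe_real hz
  obtain ⟨T, hTsm, hTnn, hTs, hTlim⟩ :=
    exists_nonneg_supermart_tendsto_top_iUnion hE s A hA (sub_pos.2 (EReal.coe_lt_coe_iff.1 hαz))
  have hdom ω (hω : ω ∈ cyl s) : ⨆ j, h j ω ≤
      liminf (fun m => P (pref ω m)) atTop + liminf (fun m => T (pref ω m)) atTop := by
    rcases le_liminf_iSup_EV_or_exists_rat hE hc ω with hgood | ⟨j, p, q, hcp, hpq, hfreq, hq⟩
    · exact hgood.trans (le_add_of_nonneg_right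
        (le_liminf_of_le (by isBoundedDefault) (Eventually.of_forall fun m => hTnn _)))
    · have hPlim : (c : EReal) ≤ liminf (fun m => P (pref ω m)) atTop :=
        le_liminf_of_le (by isBoundedDefault) (Eventually.of_forall fun m => hPc _)
      rw [(hTlim ω (Set.mem_iUnion.2 ⟨⟨(j, p, q), hcp, hpq⟩, hω, hfreq, hq⟩)).liminf_eq,
        EReal.add_top_of_ne_bot ((EReal.bot_lt_coe c).trans_le hPlim).ne']
      exact le_top
  have hN : Superhedges Qe (fun ω => ⨆ j, h j ω) s (fun t => P t + T t) :=
    ⟨⟨c, fun t => le_add_of_le_of_nonneg (hPc t) (hTnn t)⟩, hPsm.add hE hTsm hPc (c₂ := 0) hTnn,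
      fun ω hω => (hdom ω hω).trans EReal.le_liminf_add⟩
  calc EV Qe (fun ω => ⨆ j, h j ω) s ≤ P s + T s := EV_le hN
    _ ≤ α + (z - α : ℝ) := add_le_add hα.le hTs
    _ = z := by rw [← EReal.coe_add, add_sub_cancel]

theorem EV_liminf_le {fs : ℕ → (ℕ → X) → EReal} {c : ℝ} (hc : ∀ n ω, (c : EReal) ≤ fs n ω)
    (s : List X) :
    EV Qe (fun ω => liminf (fun n => fs n ω) atTop) s ≤ liminf (fun n => EV Qe (fs n) s) atTop := by
  simp_rw [liminf_eq_iSup_iInf_of_nat]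
  calc EV Qe (fun ω => ⨆ n, ⨅ k ≥ n, fs k ω) s ≤ ⨆ n, EV Qe (fun ω => ⨅ k ≥ n, fs k ω) s :=
        EV_iSup_le hE (fun _ _ hnm ω => biInf_mono fun _ hk => hnm.trans hk)
          (fun n ω => le_iInf₂ fun k _ => hc k ω) s
    _ ≤ ⨆ n, ⨅ k ≥ n, EV Qe (fs k) s :=
        iSup_mono fun _ => le_iInf₂ fun k hk => EV_mono (fun ω => iInf₂_le k hk) s

end Convergence

theorem stmt7 {X : Type*} [Fintype X] [Nonempty X]
    (Q : List X → (X → ℝ) → ℝ) (hQ : ∀ s, IsCoherent (Q s))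
    (Qe : List X → (X → EReal) → EReal) (hQe : LocalExtension Q Qe)
    (s : List X) (fs : ℕ → (ℕ → X) → EReal) (hfs : UnifBddBelow fs) :
    EV Qe (fun ω => liminf (fun n => fs n ω) atTop) s ≤
      liminf (fun n => EV Qe (fs n) s) atTop := by
  obtain ⟨c, hc⟩ := hfs
  exact EV_liminf_le (hQe.isUpperCutExtension hQ) hc s

end UEP
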